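/- Define, for n ≥ 0 and i ∈ {1,2,3}, integers D_n(i) by D_0(i) = i, D_{n+1}(1) = D_n(1)·D_n(2), D_{n+1}(2) = D_n(1)·D_n(3), and D_{n+1}(3) = D_n(2)·D_n(3). Let G be a finite 2-group acting faithfully and transitively on a finite set X with |X| = 2^n. Then there exist three functions f₁, f₂, f₃ : X → {1,2,3} such that for each i ∈ {1,2,3}: (i) the only g ∈ G satisfying f_i(g·x) = f_i(x) for all x ∈ X is the identity, and (ii) ∏_{x ∈ X} f_i(x) = D_n(i). -/

import Mathlib

/-!
Induction on `n`. A transitive `2`-group `G` on `2 ^ (n + 1)` points has a subgroup `H` of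
index `2` containing a point stabilizer; `H` then has exactly two orbits, of size `2 ^ n` each,
and every element outside `H` interchanges them. Colour the two orbits by the inductive colourings
for colours `a ≠ b` with `D (n + 1) i = D n a * D n b`. An element of `H` preserving the colouring
fixes both orbits pointwise, while an element outside `H` would carry one orbit onto the other and
force `D n a = D n b`, impossible since `D n 1 < D n 2 < D n 3`. Colourings are only asked to be
distinguishing up to the kernel of the action, since that is what survives restriction to an orbit.
-/

/-- The integers `D n i` for `i ∈ {1,2,3}`: `D 0 i = i`,
`D (n+1) 1 = D n 1 * D n 2`, `D (n+1) 2 = D n 1 * D n 3`, `D (n+1) 3 = D n 2 * D n 3`. -/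
def D : ℕ → ℕ → ℕ
  | 0, i => i
  | n + 1, 1 => D n 1 * D n 2
  | n + 1, 2 => D n 1 * D n 3
  | n + 1, 3 => D n 2 * D n 3
  | _ + 1, i => i

open MulAction

theorem D_pos_and_lt (n : ℕ) : 0 < D n 1 ∧ D n 1 < D n 2 ∧ D n 2 < D n 3 := by
  induction n with
  | zero => exact ⟨one_pos, by norm_num [D]⟩
  | succ n ih =>
    obtain ⟨h1, h2, h3⟩ := ih
    simp only [D]
    refine ⟨?_, ?_, ?_⟩ <;> nlinarith

theorem D_injOn (n : ℕ) : Set.InjOn (D n) {1, 2, 3} := by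
  obtain ⟨h1, h2, h3⟩ := D_pos_and_lt n
  rintro a (rfl | rfl | rfl) b (rfl | rfl | rfl) h <;> omega

theorem exists_D_succ_eq_mul (n : ℕ) {i : ℕ} (hi : i ∈ ({1, 2, 3} : Set ℕ)) :
    ∃ a ∈ ({1, 2, 3} : Set ℕ), ∃ b ∈ ({1, 2, 3} : Set ℕ), a ≠ b ∧ D (n + 1) i = D n a * D n b := by
  rcases hi with rfl | rfl | rfl
  · exact ⟨1, by simp, 2, by simp, by decide, rfl⟩
  · exact ⟨1, by simp, 3, by simp, by decide, rfl⟩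
  · exact ⟨2, by simp, 3, by simp, by decide, rfl⟩

section Orbits
variable {G X : Type*} [Group G] [MulAction G X] {H : Subgroup G} {x₀ : X}

theorem smul_mem_orbit_smul_iff (hH : H.index = 2) (hS : stabilizer G x₀ ≤ H) (k c : G) :
    k • x₀ ∈ orbit H (c • x₀) ↔ (k ∈ H ↔ c ∈ H) := by
  have hmul := fun a b : G => Subgroup.mul_mem_iff_of_index_two (a := a) (b := b) hH
  rw [mem_orbit_iff]
  constructor
  · rintro ⟨h, hh⟩
    have hstab : (h * c : G)⁻¹ * k ∈ stabilizer G x₀ := by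
      rw [mem_stabilizer_iff, mul_smul, ← hh, Subgroup.smul_def, smul_smul, smul_smul, mul_assoc,
        inv_mul_cancel, one_smul]
    have := hS hstab
    simp only [hmul, inv_mem_iff, h.2, true_iff] at this
    tauto
  · intro hkc
    refine ⟨⟨k * c⁻¹, by rw [hmul, inv_mem_iff]; exact hkc⟩, ?_⟩
    rw [Subgroup.mk_smul, smul_smul, inv_mul_cancel_right]

theorem smul_mem_orbit_iff (hH : H.index = 2) (hS : stabilizer G x₀ ≤ H) (k : G) :
    k • x₀ ∈ orbit H x₀ ↔ k ∈ H := by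
  simpa [H.one_mem] using smul_mem_orbit_smul_iff hH hS k 1

variable [IsPretransitive G X] {g₀ : G}

theorem mem_orbit_smul_iff_notMem_orbit (hH : H.index = 2) (hS : stabilizer G x₀ ≤ H)
    (hg₀ : g₀ ∉ H) (x : X) : x ∈ orbit H (g₀ • x₀) ↔ x ∉ orbit H x₀ := by
  obtain ⟨k, rfl⟩ := exists_smul_eq G x₀ x
  rw [smul_mem_orbit_smul_iff hH hS, smul_mem_orbit_iff hH hS]
  tauto

theorem smul_mem_orbit_smul_iff_mem_orbit (hH : H.index = 2) (hS : stabilizer G x₀ ≤ H)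
    (hg₀ : g₀ ∉ H) {g : G} (hg : g ∉ H) (x : X) :
    g • x ∈ orbit H (g₀ • x₀) ↔ x ∈ orbit H x₀ := by
  obtain ⟨k, rfl⟩ := exists_smul_eq G x₀ x
  rw [smul_smul, smul_mem_orbit_smul_iff hH hS, smul_mem_orbit_iff hH hS,
    Subgroup.mul_mem_iff_of_index_two hH]
  tauto

def orbitEquivOrbitSmul (hH : H.index = 2) (hS : stabilizer G x₀ ≤ H) (hg₀ : g₀ ∉ H) {g : G}
    (hg : g ∉ H) : orbit H x₀ ≃ orbit H (g₀ • x₀) :=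
  (toPerm g).subtypeEquiv fun x => (smul_mem_orbit_smul_iff_mem_orbit hH hS hg₀ hg x).symm

noncomputable def orbitSumOrbitSmulEquiv (hH : H.index = 2) (hS : stabilizer G x₀ ≤ H)
    (hg₀ : g₀ ∉ H) : orbit H x₀ ⊕ orbit H (g₀ • x₀) ≃ X := by
  classical
  exact ((Equiv.refl _).sumCongr
    (Equiv.subtypeEquivRight (mem_orbit_smul_iff_notMem_orbit hH hS hg₀))).trans
    (Equiv.sumCompl _)

end Orbits

theorem IsPGroup.exists_le_index_eq {G : Type*} [Group G] [Finite G] {p : ℕ} [hp : Fact p.Prime]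
    (hG : IsPGroup p G) {K : Subgroup G} (hK : K ≠ ⊤) : ∃ H : Subgroup G, K ≤ H ∧ H.index = p := by
  obtain ⟨m, hm⟩ := IsPGroup.iff_card.mp hG
  obtain ⟨k, hk⟩ := IsPGroup.iff_card.mp (hG.to_subgroup K)
  have hkm : k < m := by
    have hlt : Nat.card K < Nat.card G :=
      (Subgroup.card_le_card_group K).lt_of_ne (mt (Subgroup.card_eq_iff_eq_top K).mp hK)
    rwa [hk, hm, Nat.pow_lt_pow_iff_right hp.out.one_lt] at hlt
  obtain ⟨H, hH, hKH⟩ := Sylow.exists_subgroup_card_pow_prime_le p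
    (hm ▸ pow_dvd_pow p (Nat.sub_le m 1)) K hk (Nat.le_sub_one_of_lt hkm)
  refine ⟨H, hKH, Nat.eq_of_mul_eq_mul_left (pow_pos hp.out.pos (m - 1)) ?_⟩
  rw [← hH, H.card_mul_index, hm, hH, ← pow_succ, Nat.sub_add_cancel (by omega)]

def IsDistinguishing (G : Type*) {X α : Type*} [SMul G X] (f : X → α) : Prop :=
  ∀ g : G, (∀ x, f (g • x) = f x) → ∀ x : X, g • x = x

theorem IsDistinguishing.eq_one {G X α : Type*} [Monoid G] [MulAction G X] [FaithfulSMul G X]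
    {f : X → α} (hf : IsDistinguishing G f) {g : G} (hg : ∀ x, f (g • x) = f x) : g = 1 :=
  eq_of_smul_eq_smul fun x => by rw [hf g hg x, one_smul]

theorem IsDistinguishing.smul_eq_of_mem_orbit {G X α : Type*} [Group G] [MulAction G X]
    {H : Subgroup G} {y₀ : X} {f : orbit H y₀ → α} (hf : IsDistinguishing H f) {F : X → α}
    (hF : ∀ y : orbit H y₀, F y = f y) {g : G} (hg : g ∈ H) (hgF : ∀ x, F (g • x) = F x)
    {x : X} (hx : x ∈ orbit H y₀) : g • x = x := by
  have := hf ⟨g, hg⟩ (fun y => by rw [← hF, ← hF, orbit.coe_smul]; exact hgF y) ⟨x, hx⟩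
  exact congrArg Subtype.val this

section Gluing

variable {G X M : Type*} [Group G] [MulAction G X] [IsPretransitive G X] [Fintype X]
  [CommMonoid M] {H : Subgroup G} {x₀ : X} {g₀ : G}

theorem exists_isDistinguishing_of_orbits (hH : H.index = 2) (hS : stabilizer G x₀ ≤ H)
    (hg₀ : g₀ ∉ H) [Fintype (orbit H x₀)] [Fintype (orbit H (g₀ • x₀))] {C : Set M}
    {fA : orbit H x₀ → M} {fB : orbit H (g₀ • x₀) → M} (hfA : IsDistinguishing H fA)
    (hfB : IsDistinguishing H fB) (hAC : ∀ y, fA y ∈ C) (hBC : ∀ y, fB y ∈ C)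
    (hAB : ∏ y, fA y ≠ ∏ y, fB y) :
    ∃ F : X → M, (∀ x, F x ∈ C) ∧ IsDistinguishing G F ∧ ∏ x, F x = (∏ y, fA y) * ∏ y, fB y := by
  classical
  have hB := mem_orbit_smul_iff_notMem_orbit hH hS hg₀
  let F : X → M := fun x => if hx : x ∈ orbit H x₀ then fA ⟨x, hx⟩ else fB ⟨x, (hB x).2 hx⟩
  have hFA (y : orbit H x₀) : F y = fA y := dif_pos y.2
  have hFB (y : orbit H (g₀ • x₀)) : F y = fB y := dif_neg ((hB y).1 y.2)
  refine ⟨F, fun x => ?_, fun g hg x => ?_, ?_⟩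
  · by_cases hx : x ∈ orbit H x₀
    · exact hFA ⟨x, hx⟩ ▸ hAC _
    · exact hFB ⟨x, (hB x).2 hx⟩ ▸ hBC _
  · by_cases hgH : g ∈ H
    · by_cases hx : x ∈ orbit H x₀
      · exact hfA.smul_eq_of_mem_orbit hFA hgH hg hx
      · exact hfB.smul_eq_of_mem_orbit hFB hgH hg ((hB x).2 hx)
    · refine absurd ?_ hAB
      calc ∏ y, fA y = ∏ y : orbit H x₀, F (g • y) := by simp only [hg, hFA]
        _ = ∏ y : orbit H (g₀ • x₀), F y :=
          Fintype.prod_equiv (orbitEquivOrbitSmul hH hS hg₀ hgH) _ _ fun _ => rfl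
        _ = ∏ y, fB y := by simp only [hFB]
  · rw [← Fintype.prod_equiv (orbitSumOrbitSmulEquiv hH hS hg₀) _ F fun _ => rfl,
      Fintype.prod_sum_type]
    exact congrArg₂ (· * ·) (Fintype.prod_congr _ _ hFA) (Fintype.prod_congr _ _ hFB)

end Gluing

theorem exists_isDistinguishing_prod_eq_D (n : ℕ) {G X : Type*} [Group G] [Finite G]
    [MulAction G X] [IsPretransitive G X] [Fintype X] (hG : IsPGroup 2 G)
    (hX : Nat.card X = 2 ^ n) {i : ℕ} (hi : i ∈ ({1, 2, 3} : Set ℕ)) :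
    ∃ f : X → ℕ, (∀ x, f x ∈ ({1, 2, 3} : Set ℕ)) ∧ IsDistinguishing G f ∧ ∏ x, f x = D n i := by
  induction n generalizing G X i with
  | zero =>
    have : Subsingleton X := (Nat.card_eq_one_iff_unique.mp hX).1
    refine ⟨fun _ => i, fun _ => hi, fun g _ x => Subsingleton.elim _ _, ?_⟩
    rw [Finset.prod_const, Finset.card_univ, ← Nat.card_eq_fintype_card, hX, pow_zero, pow_one]
    rfl
  | succ n ih =>
    classical
    obtain ⟨x₀⟩ : Nonempty X := Nat.card_pos_iff.mp (by rw [hX]; positivity) |>.1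
    have hS : stabilizer G x₀ ≠ ⊤ := fun h => by
      have := index_stabilizer_of_transitive G x₀
      rw [h, Subgroup.index_top, hX] at this
      exact (Nat.one_lt_two_pow n.succ_ne_zero).ne this
    obtain ⟨H, hSH, hH⟩ := hG.exists_le_index_eq hS
    obtain ⟨g₀, hg₀⟩ : ∃ g₀, g₀ ∉ H := by
      by_contra! h
      rw [(Subgroup.eq_top_iff' H).mpr h, Subgroup.index_top] at hH
      omega
    have hcard := Nat.card_congr (orbitSumOrbitSmulEquiv hH hSH hg₀)
    have hcard' := Nat.card_congr (orbitEquivOrbitSmul hH hSH hg₀ hg₀)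
    rw [Nat.card_sum, hX, pow_succ] at hcard
    obtain ⟨a, ha, b, hb, hab, hD⟩ := exists_D_succ_eq_mul n hi
    obtain ⟨fA, hAC, hfA, hAprod⟩ := ih (X := orbit H x₀) (hG.to_subgroup H) (by omega) ha
    obtain ⟨fB, hBC, hfB, hBprod⟩ := ih (X := orbit H (g₀ • x₀)) (hG.to_subgroup H) (by omega) hb
    obtain ⟨F, hFC, hF, hFprod⟩ := exists_isDistinguishing_of_orbits hH hSH hg₀ hfA hfB hAC hBC
      (by rw [hAprod, hBprod]; exact fun h => hab (D_injOn n ha hb h))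
    exact ⟨F, hFC, hF, by rw [hFprod, hAprod, hBprod, hD]⟩

/-- If a finite `2`-group `G` acts faithfully and transitively on a finite set `X` with
`|X| = 2 ^ n`, then there are three `3`-colorings `f₁, f₂, f₃ : X → {1,2,3}` such that for
each `i`, the only color-preserving element of `G` is the identity and `∏_{x} fᵢ x = D n i`. -/
theorem two_group_transitive_three_colorings (n : ℕ) (G X : Type*) [Group G] [Finite G]
    (hG : IsPGroup 2 G) [MulAction G X] [FaithfulSMul G X]
    [MulAction.IsPretransitive G X] [Fintype X] (hX : Nat.card X = 2 ^ n) :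
    ∃ f₁ f₂ f₃ : X → ℕ,
      ((∀ x : X, f₁ x ∈ ({1, 2, 3} : Set ℕ)) ∧
        (∀ g : G, (∀ x : X, f₁ (g • x) = f₁ x) → g = 1) ∧ ∏ x : X, f₁ x = D n 1) ∧
      ((∀ x : X, f₂ x ∈ ({1, 2, 3} : Set ℕ)) ∧
        (∀ g : G, (∀ x : X, f₂ (g • x) = f₂ x) → g = 1) ∧ ∏ x : X, f₂ x = D n 2) ∧
      ((∀ x : X, f₃ x ∈ ({1, 2, 3} : Set ℕ)) ∧
        (∀ g : G, (∀ x : X, f₃ (g • x) = f₃ x) → g = 1) ∧ ∏ x : X, f₃ x = D n 3) := by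
  obtain ⟨f₁, h₁C, h₁, h₁prod⟩ := exists_isDistinguishing_prod_eq_D n hG hX (i := 1) (by simp)
  obtain ⟨f₂, h₂C, h₂, h₂prod⟩ := exists_isDistinguishing_prod_eq_D n hG hX (i := 2) (by simp)
  obtain ⟨f₃, h₃C, h₃, h₃prod⟩ := exists_isDistinguishing_prod_eq_D n hG hX (i := 3) (by simp)
  exact ⟨f₁, f₂, f₃, ⟨h₁C, fun _ => h₁.eq_one, h₁prod⟩, ⟨h₂C, fun _ => h₂.eq_one, h₂prod⟩,
    ⟨h₃C, fun _ => h₃.eq_one, h₃prod⟩⟩
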